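/- Let n ≥ 3, let W be a four-linear form on ℝⁿ with the symmetries of a Weyl tensor, let h_{ab}(x) = (1/3)∑_{p,q=1}^n W_{apbq}x_px_q, and for a, b ∈ {1,…,n} define L⁰_{ab}(x) = −(1/(3n)) (∑_{p,q=1}^n W_{apbq} x_p x_q) (1 + |x|²/(n(n−2)))^{−n/2}. Then L⁰_{ab} solves the linearized bubble equation with source: −∑_{i=1}^n ∂²_{ii} L⁰_{ab}(x) − (2*−1) B_{1,0}(x)^{2*−2} L⁰_{ab}(x) = −(2/(n(n−2))) h_{ab}(x) (1 + |x|²/(n(n−2)))^{−(n+2)/2} for all x ∈ ℝⁿ, where 2* = 2n/(n−2) and B_{1,0}(x) = (1 + |x|²/(n(n−2)))^{−(n−2)/2}. -/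

import Mathlib

open MeasureTheory Real

noncomputable section

/-- The Euclidean space `ℝⁿ`. -/
abbrev En (n : ℕ) := EuclideanSpace ℝ (Fin n)

/-- Partial derivative in the `i`-th coordinate direction. -/
noncomputable def pd {n : ℕ} (i : Fin n) (f : En n → ℝ) (x : En n) : ℝ :=
  fderiv ℝ f x (EuclideanSpace.single i 1)

/-- `W` has the symmetries of a Weyl tensor. -/
def IsWeyl (n : ℕ) (W : Fin n → Fin n → Fin n → Fin n → ℝ) : Prop :=
  (∀ i j k l, W i j k l = -W j i k l) ∧
  (∀ i j k l, W i j k l = -W i j l k) ∧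
  (∀ i j k l, W i j k l = W k l i j) ∧
  (∀ j l, ∑ i, W i j i l = 0) ∧
  (∀ i j k l, W i j k l + W j k i l + W k i j l = 0)

/-- The quadratic field associated to `W`: `h_{ab}(x) = (1/3)∑_{p,q} W_{apbq} x_p x_q`. -/
noncomputable def hW (n : ℕ) (W : Fin n → Fin n → Fin n → Fin n → ℝ)
    (x : En n) (a b : Fin n) : ℝ :=
  (1 / 3) * ∑ p, ∑ q, W a p b q * x p * x q

/-- The standard bubble with `t = 1`, `z = 0`:
`B_{1,0}(x) = (1 + |x|²/(n(n-2)))^{-(n-2)/2}`. -/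
noncomputable def Bub10 (n : ℕ) (x : En n) : ℝ :=
  (1 + ‖x‖ ^ 2 / ((n : ℝ) * ((n : ℝ) - 2))) ^ (-(((n : ℝ) - 2) / 2))

/-- `L⁰_{ab}(x) = -(1/(3n)) (∑_{p,q} W_{apbq} x_p x_q)(1 + |x|²/(n(n-2)))^{-n/2}`. -/
noncomputable def L0 (n : ℕ) (W : Fin n → Fin n → Fin n → Fin n → ℝ)
    (a b : Fin n) (x : En n) : ℝ :=
  -(1 / (3 * (n : ℝ))) * (∑ p, ∑ q, W a p b q * x p * x q) *
    (1 + ‖x‖ ^ 2 / ((n : ℝ) * ((n : ℝ) - 2))) ^ (-((n : ℝ) / 2))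

/-!
Write `Δ = ∑ᵢ ∂ᵢ²` (the analyst's sign), `λ = n(n-2)` and `G(x) = 1 + |x|²/λ`. Then
`L⁰_{ab} = Q·G^{-n/2}` for the quadratic form `Q` with matrix `-(1/(3n)) W_{a·b·}`, which
is trace-free because `W` is. The product rule `Δ(Q g) = ΔQ·g + 2∇Q·∇g + Q·Δg`, with
`ΔQ = 2 tr = 0`, Euler's identity `x·∇Q = 2Q` and `∇(G^r) = (2r/λ) G^{r-1} x`, gives
`Δ(Q G^r) = (2r/λ) Q ((n+4) G^{r-1} + (2(r-1)/λ) |x|² G^{r-2})`.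
For `r = -n/2`, substituting `|x|² = λ(G-1)` and `B_{1,0}^{2*-2} = G^{-2}` collapses the left-hand
side to `(2/(n-2)) Q G^{-(n+2)/2}`.
-/

section

variable {n : ℕ}

theorem differentiable_ofLp_apply (j : Fin n) : Differentiable ℝ (fun y : En n => y j) :=
  fun x => (PiLp.hasFDerivAt_apply 2 x j).differentiableAt

theorem pd_apply (i j : Fin n) (x : En n) :
    pd i (fun y : En n => y j) x = if j = i then 1 else 0 := by
  simp [pd, (PiLp.hasFDerivAt_apply (𝕜 := ℝ) 2 x j).fderiv, PiLp.single_apply]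

theorem pd_add {f g : En n → ℝ} {x : En n} (hf : DifferentiableAt ℝ f x)
    (hg : DifferentiableAt ℝ g x) (i : Fin n) :
    pd i (fun y => f y + g y) x = pd i f x + pd i g x := by
  simp [pd, (hf.hasFDerivAt.fun_add hg.hasFDerivAt).fderiv]

theorem pd_sum {ι : Type*} (s : Finset ι) {f : ι → En n → ℝ} {x : En n}
    (hf : ∀ k ∈ s, DifferentiableAt ℝ (f k) x) (i : Fin n) :
    pd i (fun y => ∑ k ∈ s, f k y) x = ∑ k ∈ s, pd i (f k) x := by
  simp [pd, (HasFDerivAt.fun_sum fun k hk => (hf k hk).hasFDerivAt).fderiv]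

theorem pd_mul {f g : En n → ℝ} {x : En n} (hf : DifferentiableAt ℝ f x)
    (hg : DifferentiableAt ℝ g x) (i : Fin n) :
    pd i (fun y => f y * g y) x = pd i f x * g x + f x * pd i g x := by
  simp [pd, (hf.hasFDerivAt.fun_mul hg.hasFDerivAt).fderiv]
  ring

theorem pd_const_mul {f : En n → ℝ} {x : En n} (hf : DifferentiableAt ℝ f x) (c : ℝ)
    (i : Fin n) : pd i (fun y => c * f y) x = c * pd i f x := by
  simp [pd, (hf.hasFDerivAt.const_mul c).fderiv]

theorem pd_rpow_const {f : En n → ℝ} {x : En n} (hf : DifferentiableAt ℝ f x)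
    (hfx : f x ≠ 0) (r : ℝ) (i : Fin n) :
    pd i (fun y => f y ^ r) x = r * f x ^ (r - 1) * pd i f x := by
  simp [pd, (hf.hasFDerivAt.rpow_const (p := r) (Or.inl hfx)).fderiv]

def coordLaplacian (f : En n → ℝ) (x : En n) : ℝ := ∑ i, pd i (pd i f) x

theorem coordLaplacian_mul {u v : En n → ℝ} {x : En n} (hu : Differentiable ℝ u)
    (hv : Differentiable ℝ v) (hu' : ∀ i, DifferentiableAt ℝ (pd i u) x)
    (hv' : ∀ i, DifferentiableAt ℝ (pd i v) x) :
    coordLaplacian (fun y => u y * v y) x =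
      coordLaplacian u x * v x + 2 * ∑ i, pd i u x * pd i v x + u x * coordLaplacian v x := by
  have hpd (i : Fin n) :
      pd i (fun y => u y * v y) = fun y => pd i u y * v y + u y * pd i v y :=
    funext fun y => pd_mul (hu y) (hv y) i
  simp only [coordLaplacian, hpd, Finset.sum_mul, Finset.mul_sum, ← Finset.sum_add_distrib]
  refine Finset.sum_congr rfl fun i _ => ?_
  rw [pd_add ((hu' i).fun_mul (hv x)) ((hu x).fun_mul (hv' i)), pd_mul (hu' i) (hv x),
    pd_mul (hu x) (hv' i)]
  ring

def quadForm (M : Fin n → Fin n → ℝ) (y : En n) : ℝ := ∑ p, ∑ q, M p q * y p * y q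

section quadForm

variable (M : Fin n → Fin n → ℝ)

theorem differentiable_quadForm : Differentiable ℝ (quadForm M) := by
  unfold quadForm; fun_prop

theorem pd_quadForm (i : Fin n) :
    pd i (quadForm M) = fun y => ∑ q, (M i q + M q i) * y q := by
  funext y
  have term (p q : Fin n) : pd i (fun y : En n => M p q * y p * y q) y =
      M p q * ((if p = i then 1 else 0) * y q + y p * (if q = i then 1 else 0)) := by
    rw [pd_mul (by fun_prop) (by fun_prop), pd_const_mul (by fun_prop), pd_apply, pd_apply]
    ring
  have row (p : Fin n) : pd i (fun y : En n => ∑ q, M p q * y p * y q) y =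
      ∑ q, M p q * ((if p = i then 1 else 0) * y q + y p * (if q = i then 1 else 0)) := by
    rw [pd_sum _ (fun q _ => by fun_prop)]
    exact Finset.sum_congr rfl fun q _ => term p q
  unfold quadForm
  rw [pd_sum _ (fun p _ => by fun_prop)]
  simp only [row]
  simp [mul_add, add_mul, Finset.sum_add_distrib]

theorem coordLaplacian_quadForm (x : En n) :
    coordLaplacian (quadForm M) x = 2 * ∑ i, M i i := by
  have diag (i : Fin n) : pd i (pd i (quadForm M)) x = 2 * M i i := by
    have term (q : Fin n) : pd i (fun y : En n => (M i q + M q i) * y q) x =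
        (M i q + M q i) * if q = i then 1 else 0 := by
      rw [pd_const_mul (by fun_prop), pd_apply]
    rw [pd_quadForm, pd_sum _ (fun q _ => by fun_prop)]
    simp only [term, mul_ite, mul_one, mul_zero, Finset.sum_ite_eq', Finset.mem_univ, if_true]
    ring
  simp only [coordLaplacian, diag, Finset.mul_sum]

theorem sum_pd_quadForm_mul (x : En n) :
    ∑ i, pd i (quadForm M) x * x i = 2 * quadForm M x := by
  simp only [pd_quadForm, quadForm, Finset.sum_mul, add_mul, Finset.sum_add_distrib]
  rw [Finset.sum_comm (f := fun i q => M q i * x q * x i), two_mul]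
  congr 1
  exact Finset.sum_congr rfl fun _ _ => Finset.sum_congr rfl fun _ _ => by ring

end quadForm

def bubbleBase (lam : ℝ) (y : En n) : ℝ := 1 + ‖y‖ ^ 2 / lam

section bubbleBase

variable {lam : ℝ}

theorem hasFDerivAt_bubbleBase (y : En n) :
    HasFDerivAt (bubbleBase lam) ((2 / lam) • innerSL ℝ y) y := by
  have h := ((hasStrictFDerivAt_norm_sq y).hasFDerivAt.mul_const lam⁻¹).const_add 1
  have e : bubbleBase (n := n) lam = fun z => 1 + ‖z‖ ^ 2 * lam⁻¹ := by
    funext z; simp only [bubbleBase, div_eq_mul_inv]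
  rw [e]
  exact h.congr_fderiv (by module)

theorem differentiable_bubbleBase : Differentiable ℝ (bubbleBase (n := n) lam) := fun y =>
  (hasFDerivAt_bubbleBase y).differentiableAt

theorem pd_bubbleBase (i : Fin n) (y : En n) : pd i (bubbleBase lam) y = 2 * y i / lam := by
  simp [pd, (hasFDerivAt_bubbleBase y).fderiv, EuclideanSpace.inner_single_right]
  ring

variable (hlam : 0 ≤ lam)
include hlam

theorem bubbleBase_pos (y : En n) : 0 < bubbleBase lam y := by
  unfold bubbleBase; positivity

theorem differentiable_rpow_bubbleBase (r : ℝ) :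
    Differentiable ℝ (fun y : En n => bubbleBase lam y ^ r) := fun y =>
  (differentiable_bubbleBase y).rpow_const (Or.inl (bubbleBase_pos hlam y).ne')

theorem pd_rpow_bubbleBase (r : ℝ) (i : Fin n) :
    pd i (fun y : En n => bubbleBase lam y ^ r) =
      fun y => 2 * r / lam * (y i * bubbleBase lam y ^ (r - 1)) := by
  funext y
  rw [pd_rpow_const (differentiable_bubbleBase y) (bubbleBase_pos hlam y).ne', pd_bubbleBase]
  ring

theorem differentiable_pd_rpow_bubbleBase (r : ℝ) (i : Fin n) :
    Differentiable ℝ (pd i fun y : En n => bubbleBase lam y ^ r) := by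
  rw [pd_rpow_bubbleBase hlam]
  exact ((differentiable_ofLp_apply i).mul (differentiable_rpow_bubbleBase hlam _)).const_mul _

theorem coordLaplacian_rpow_bubbleBase (r : ℝ) (x : En n) :
    coordLaplacian (fun y : En n => bubbleBase lam y ^ r) x =
      2 * r / lam * (n * bubbleBase lam x ^ (r - 1) +
        2 * (r - 1) / lam * ‖x‖ ^ 2 * bubbleBase lam x ^ (r - 2)) := by
  have hB := differentiable_rpow_bubbleBase hlam (r - 1) x
  have diag (i : Fin n) : pd i (pd i fun y : En n => bubbleBase lam y ^ r) x =
      2 * r / lam * (bubbleBase lam x ^ (r - 1) +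
        2 * (r - 1) / lam * bubbleBase lam x ^ (r - 2) * x i ^ 2) := by
    have hi := differentiable_ofLp_apply i x
    rw [pd_rpow_bubbleBase hlam, pd_const_mul (hi.fun_mul hB), pd_mul hi hB, pd_apply,
      pd_rpow_bubbleBase hlam, if_pos rfl, show r - 1 - 1 = r - 2 by ring]
    ring
  simp only [coordLaplacian, diag, ← Finset.mul_sum, Finset.sum_add_distrib,
    EuclideanSpace.real_norm_sq_eq, Finset.sum_const, Finset.card_univ, Fintype.card_fin,
    nsmul_eq_mul]
  ring

end bubbleBase

theorem coordLaplacian_quadForm_mul_rpow_bubbleBase {M : Fin n → Fin n → ℝ}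
    (hM : ∑ i, M i i = 0) {lam : ℝ} (hlam : 0 ≤ lam) (r : ℝ) (x : En n) :
    coordLaplacian (fun y => quadForm M y * bubbleBase lam y ^ r) x =
      2 * r / lam * quadForm M x * ((n + 4) * bubbleBase lam x ^ (r - 1) +
        2 * (r - 1) / lam * ‖x‖ ^ 2 * bubbleBase lam x ^ (r - 2)) := by
  have cross : ∑ i, pd i (quadForm M) x * pd i (fun y => bubbleBase lam y ^ r) x =
      2 * r / lam * bubbleBase lam x ^ (r - 1) * (2 * quadForm M x) := by
    simp only [← sum_pd_quadForm_mul, Finset.mul_sum, pd_rpow_bubbleBase hlam]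
    exact Finset.sum_congr rfl fun i _ => by ring
  rw [coordLaplacian_mul (differentiable_quadForm M) (differentiable_rpow_bubbleBase hlam r)
    (fun i => by rw [pd_quadForm]; fun_prop)
    (fun i => differentiable_pd_rpow_bubbleBase hlam r i x),
    coordLaplacian_quadForm, hM, coordLaplacian_rpow_bubbleBase hlam, cross]
  ring

theorem linearized_quadForm_mul_rpow_bubbleBase {M : Fin n → Fin n → ℝ}
    (hM : ∑ i, M i i = 0) (hn : 2 < n) (x : En n) :
    -coordLaplacian
        (fun y => quadForm M y * bubbleBase (n * (n - 2)) y ^ (-((n : ℝ) / 2))) x -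
      (n + 2) / (n - 2) * (bubbleBase (n * (n - 2)) x ^ 2)⁻¹ *
        (quadForm M x * bubbleBase (n * (n - 2)) x ^ (-((n : ℝ) / 2))) =
      2 / (n - 2) * quadForm M x * bubbleBase (n * (n - 2)) x ^ (-(((n : ℝ) + 2) / 2)) := by
  have hn2 : (0 : ℝ) < n - 2 := sub_pos.mpr (by exact_mod_cast hn)
  have hlam : (0 : ℝ) < n * (n - 2) := by positivity
  rw [coordLaplacian_quadForm_mul_rpow_bubbleBase hM hlam.le]
  set B := bubbleBase (n * (n - 2)) x
  have hB : 0 < B := bubbleBase_pos hlam.le x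
  have hnorm : ‖x‖ ^ 2 = n * (n - 2) * (B - 1) := by
    simp only [B, bubbleBase]; field_simp; ring
  have hpow (k : ℝ) : B ^ (-((n : ℝ) / 2) - k) = B ^ (-((n : ℝ) / 2)) / B ^ k :=
    Real.rpow_sub hB _ _
  rw [hnorm, show -(((n : ℝ) + 2) / 2) = -((n : ℝ) / 2) - 1 by ring, hpow, hpow, Real.rpow_one,
    Real.rpow_two]
  field_simp
  ring

theorem Bub10_rpow_eq_inv_sq_bubbleBase (hn : 2 < n) (x : En n) :
    Bub10 n x ^ (2 * (n : ℝ) / (n - 2) - 2) = (bubbleBase (n * (n - 2)) x ^ 2)⁻¹ := by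
  have hn2 : (0 : ℝ) < n - 2 := sub_pos.mpr (by exact_mod_cast hn)
  have hB := bubbleBase_pos (by positivity : (0 : ℝ) ≤ n * (n - 2)) x
  rw [show Bub10 n x = bubbleBase (n * (n - 2)) x ^ (-(((n : ℝ) - 2) / 2)) from rfl,
    ← Real.rpow_mul hB.le, ← Real.rpow_two, ← Real.rpow_neg hB.le]
  congr 1
  field_simp
  ring

theorem IsWeyl.trace_eq_zero {W : Fin n → Fin n → Fin n → Fin n → ℝ} (hW : IsWeyl n W)
    (a b : Fin n) : ∑ i, W a i b i = 0 := by
  obtain ⟨h1, h2, h3, h4, -⟩ := hW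
  calc ∑ i, W a i b i = ∑ i, W i b i a := Finset.sum_congr rfl fun i _ => by
        rw [h3, h1, h2, neg_neg]
    _ = 0 := h4 b a

theorem L0_eq (W : Fin n → Fin n → Fin n → Fin n → ℝ) (a b : Fin n) :
    L0 n W a b = fun y => quadForm (fun p q => -(1 / (3 * (n : ℝ))) * W a p b q) y *
      bubbleBase (n * (n - 2)) y ^ (-((n : ℝ) / 2)) := by
  funext y
  simp only [L0, quadForm, bubbleBase, Finset.mul_sum, mul_assoc]

end

theorem stmt16 (n : ℕ) (hn : 3 ≤ n) (W : Fin n → Fin n → Fin n → Fin n → ℝ)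
    (hWeyl : IsWeyl n W) (a b : Fin n) (x : En n) :
    -(∑ i : Fin n, pd i (fun y => pd i (L0 n W a b) y) x) -
        (2 * (n : ℝ) / ((n : ℝ) - 2) - 1) *
          Bub10 n x ^ (2 * (n : ℝ) / ((n : ℝ) - 2) - 2) * L0 n W a b x =
      -(2 / ((n : ℝ) * ((n : ℝ) - 2))) * hW n W x a b *
        (1 + ‖x‖ ^ 2 / ((n : ℝ) * ((n : ℝ) - 2))) ^ (-(((n : ℝ) + 2) / 2)) := by
  have hn2 : (n : ℝ) - 2 ≠ 0 := (sub_pos.mpr (by exact_mod_cast hn : (2 : ℝ) < n)).ne'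
  have htrace : ∑ i, -(1 / (3 * (n : ℝ))) * W a i b i = 0 := by
    rw [← Finset.mul_sum, hWeyl.trace_eq_zero, mul_zero]
  have hQ : quadForm (fun p q => -(1 / (3 * (n : ℝ))) * W a p b q) x =
      -(1 / n) * hW n W x a b := by
    simp only [quadForm, hW, Finset.mul_sum]; field_simp
  change -coordLaplacian (L0 n W a b) x - _ = _ * _ * bubbleBase (n * (n - 2)) x ^ _
  rw [Bub10_rpow_eq_inv_sq_bubbleBase hn,
    show 2 * (n : ℝ) / (n - 2) - 1 = (n + 2) / (n - 2) by field_simp; ring,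
    L0_eq, linearized_quadForm_mul_rpow_bubbleBase htrace hn, hQ]
  field_simp
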